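/- Let n ≥ 1 and 0 < λ ≤ Λ. Let A be a symmetric positive definite n×n real matrix with λ|ξ|² ≤ ⟨Aξ, ξ⟩ ≤ Λ|ξ|² for all ξ ∈ ℝⁿ, let S := A^{1/2}, let x₀ ∈ ℝⁿ and define T^{−1}(y) := S(y − x₀) + x₀. Let r > 0, θ ∈ (0, Λ^{−1/2}], and let u : ℝⁿ → ℝ be continuously differentiable on B_r(x₀). Then (θr)^{1−n} ∫_{B_{θr}(x₀)} |∇(u ∘ T^{−1})(y)|² dy ≤ λ^{−n/2} Λ θ^{1−n} · r^{1−n} ∫_{B_r(x₀)} |∇u(x)|² dx. -/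

import Mathlib

open MeasureTheory
open scoped RealInnerProductSpace ENNReal

/-- The square root of a positive semidefinite matrix (junk value `0` if the matrix is
not positive semidefinite). -/
noncomputable def matrixSqrt {n : ℕ} (A : Matrix (Fin n) (Fin n) ℝ) :
    Matrix (Fin n) (Fin n) ℝ :=
  @dite _ A.PosSemidef (Classical.dec _) (fun h => (h.1.eigenvectorUnitary : Matrix (Fin n) (Fin n) ℝ) *
    Matrix.diagonal ((↑) ∘ (√·) ∘ h.1.eigenvalues) *
    (star h.1.eigenvectorUnitary : Matrix (Fin n) (Fin n) ℝ)) (fun _ => 0)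

/-!
Write `S = A^{1/2}` and `T y = S (y - x₀) + x₀`. Since `S` is symmetric, the chain rule gives
`∇(u ∘ T) = S (∇u ∘ T)`, and `|S ξ|² = ⟪A ξ, ξ⟫ ≤ Λ |ξ|²`, so `|∇(u ∘ T)|² ≤ Λ |∇u ∘ T|²` and
`‖S‖ ≤ √Λ`. The latter together with `θ ≤ Λ^{-1/2}` makes `T` map `B_{θr}(x₀)` into `B_r(x₀)`.
Substituting `x = T y` costs the Jacobian `det S = √(det A) ≥ λ^{n/2}`, the last bound because
every eigenvalue of `A` is at least `λ`.
-/

open Set Metric Matrix ContinuousLinearMap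

section MatrixSqrt

variable {n : ℕ} {A : Matrix (Fin n) (Fin n) ℝ}

theorem matrixSqrt_eq (hA : A.PosSemidef) :
    matrixSqrt A = (hA.1.eigenvectorUnitary : Matrix (Fin n) (Fin n) ℝ) *
      diagonal ((↑) ∘ (√·) ∘ hA.1.eigenvalues) *
      (star hA.1.eigenvectorUnitary : Matrix (Fin n) (Fin n) ℝ) :=
  dif_pos hA

theorem posSemidef_matrixSqrt (hA : A.PosSemidef) : (matrixSqrt A).PosSemidef := by
  have hD : (diagonal ((↑) ∘ (√·) ∘ hA.1.eigenvalues) : Matrix (Fin n) (Fin n) ℝ).PosSemidef :=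
    PosSemidef.diagonal fun i => by simp [Real.sqrt_nonneg]
  simpa [matrixSqrt_eq hA, star_eq_conjTranspose] using
    hD.mul_mul_conjTranspose_same (hA.1.eigenvectorUnitary : Matrix (Fin n) (Fin n) ℝ)

theorem matrixSqrt_mul_self (hA : A.PosSemidef) : matrixSqrt A * matrixSqrt A = A := by
  have hUU : (star hA.1.eigenvectorUnitary : Matrix (Fin n) (Fin n) ℝ) *
      (hA.1.eigenvectorUnitary : Matrix (Fin n) (Fin n) ℝ) = 1 :=
    Unitary.coe_star_mul_self _
  have hDD : (diagonal ((↑) ∘ (√·) ∘ hA.1.eigenvalues) : Matrix (Fin n) (Fin n) ℝ) *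
      diagonal ((↑) ∘ (√·) ∘ hA.1.eigenvalues) = diagonal (RCLike.ofReal ∘ hA.1.eigenvalues) := by
    rw [diagonal_mul_diagonal]
    congr 1
    funext i
    simp [Real.mul_self_sqrt (hA.eigenvalues_nonneg i)]
  conv_rhs => rw [hA.1.spectral_theorem]
  rw [Unitary.conjStarAlgAut_apply, ← hDD, matrixSqrt_eq hA]
  simp only [mul_assoc]
  rw [← mul_assoc (star hA.1.eigenvectorUnitary : Matrix (Fin n) (Fin n) ℝ), hUU, one_mul]

theorem rpow_le_det_matrixSqrt {lam : ℝ} (hA : A.PosSemidef) (hlam : 0 ≤ lam)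
    (hdet : lam ^ n ≤ A.det) : lam ^ ((n : ℝ) / 2) ≤ (matrixSqrt A).det := by
  have hS := posSemidef_matrixSqrt hA
  have hsq : (lam ^ ((n : ℝ) / 2)) ^ 2 = lam ^ n := by
    rw [← Real.rpow_natCast, ← Real.rpow_mul hlam]
    norm_num
  rw [← pow_le_pow_iff_left₀ (by positivity) hS.det_nonneg two_ne_zero, hsq, sq, ← det_mul,
    matrixSqrt_mul_self hA]
  exact hdet

end MatrixSqrt

section EuclideanMatrix

variable {ι : Type*} [Fintype ι] [DecidableEq ι] {A : Matrix ι ι ℝ} {lam K : ℝ}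

theorem Matrix.IsHermitian.le_eigenvalues (hA : A.IsHermitian)
    (h : ∀ ξ, lam * ‖ξ‖ ^ 2 ≤ ⟪toEuclideanLin A ξ, ξ⟫) (i : ι) : lam ≤ hA.eigenvalues i := by
  have hv : toEuclideanLin A (hA.eigenvectorBasis i) =
      hA.eigenvalues i • hA.eigenvectorBasis i := by
    ext j
    exact congrFun (hA.mulVec_eigenvectorBasis i) j
  simpa [hv, real_inner_smul_left, real_inner_self_eq_norm_sq,
    hA.eigenvectorBasis.orthonormal.1 i] using h (hA.eigenvectorBasis i)

theorem Matrix.IsHermitian.pow_card_le_det (hA : A.IsHermitian) (hlam : 0 ≤ lam)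
    (h : ∀ ξ, lam * ‖ξ‖ ^ 2 ≤ ⟪toEuclideanLin A ξ, ξ⟫) : lam ^ Fintype.card ι ≤ A.det := by
  rw [hA.det_eq_prod_eigenvalues, ← Finset.card_univ, ← Finset.prod_const]
  exact Finset.prod_le_prod (fun _ _ => hlam) fun i _ => hA.le_eigenvalues h i

theorem Matrix.IsHermitian.norm_toEuclideanCLM_le {S : Matrix ι ι ℝ} (hS : S.IsHermitian)
    (hK : 0 ≤ K) (h : ∀ ξ, ⟪toEuclideanLin (S * S) ξ, ξ⟫ ≤ K ^ 2 * ‖ξ‖ ^ 2) :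
    ‖toEuclideanCLM (𝕜 := ℝ) S‖ ≤ K := by
  refine opNorm_le_bound _ hK fun ξ => ?_
  refine pow_le_pow_iff_left₀ (norm_nonneg _) (by positivity) two_ne_zero |>.1 ?_
  have hsymm : (toEuclideanLin S).IsSymmetric := isSymmetric_toEuclideanLin_iff.mpr hS
  calc ‖toEuclideanCLM (𝕜 := ℝ) S ξ‖ ^ 2 = ⟪toEuclideanLin S ξ, toEuclideanLin S ξ⟫ :=
        (real_inner_self_eq_norm_sq _).symm
    _ = ⟪toEuclideanLin (S * S) ξ, ξ⟫ := by
        rw [hsymm, real_inner_comm, toLpLin_mul_same, LinearMap.comp_apply]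
    _ ≤ (K * ‖ξ‖) ^ 2 := by rw [mul_pow]; exact h ξ

theorem Matrix.det_toEuclideanCLM (S : Matrix ι ι ℝ) : (toEuclideanCLM (𝕜 := ℝ) S).det = S.det := by
  rw [ContinuousLinearMap.det, coe_toEuclideanCLM_eq_toEuclideanLin, toEuclideanLin,
    toLpLin_eq_toLin, LinearMap.det_toLin]

end EuclideanMatrix

section ChangeOfVariables

variable {E : Type*} [NormedAddCommGroup E] [NormedSpace ℝ E] [FiniteDimensional ℝ E]
  [MeasurableSpace E] [BorelSpace E] (μ : Measure E) [μ.IsAddHaarMeasure]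

theorem ofReal_abs_det_mul_setLIntegral_comp_le {T : E → E} {L : E →L[ℝ] E} {s t : Set E}
    (hs : MeasurableSet s) (hT : ∀ y, HasFDerivAt T L y) (hinj : InjOn T s) (hst : MapsTo T s t)
    (g : E → ℝ≥0∞) :
    ENNReal.ofReal |L.det| * ∫⁻ y in s, g (T y) ∂μ ≤ ∫⁻ x in t, g x ∂μ := by
  rw [← lintegral_const_mul' _ _ ENNReal.ofReal_ne_top,
    ← lintegral_image_eq_lintegral_abs_det_fderiv_mul μ hs (fun y _ => (hT y).hasFDerivWithinAt)
      hinj]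
  exact lintegral_mono_set hst.image_subset

end ChangeOfVariables

section Gradient

variable {E : Type*} [NormedAddCommGroup E] [InnerProductSpace ℝ E] [CompleteSpace E]

-- Both sides vanish where `u` is not differentiable at `L (y - x₀) + x₀`, as `L` is invertible.
theorem gradient_comp_affine {L : E →L[ℝ] E} (hL : IsUnit L) (u : E → ℝ) (x₀ y : E) :
    gradient (fun z => u (L (z - x₀) + x₀)) y = adjoint L (gradient u (L (y - x₀) + x₀)) := by
  set e := ContinuousLinearEquiv.unitsEquiv ℝ E hL.unit
  have hfderiv : fderiv ℝ (fun z => u (L (z - x₀) + x₀)) y =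
      (fderiv ℝ u (L (y - x₀) + x₀)).comp L := by
    rw [fderiv_comp_sub (f := fun w => u (L w + x₀)),
      show (fun w => u (L w + x₀)) = (fun w => u (w + x₀)) ∘ e from rfl,
      e.comp_right_fderiv, fderiv_comp_add_right]
    rfl
  apply (InnerProductSpace.toDual ℝ E).injective
  ext ξ
  simp only [gradient, hfderiv, LinearIsometryEquiv.apply_symm_apply,
    InnerProductSpace.toDual_apply_apply, adjoint_inner_left, InnerProductSpace.toDual_symm_apply,
    ContinuousLinearMap.comp_apply]

end Gradient

theorem mapsTo_ball_affine {E : Type*} [SeminormedAddCommGroup E] [NormedSpace ℝ E]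
    (L : E →L[ℝ] E) {K ρ r : ℝ} (hL : ‖L‖ ≤ K) (hK : 0 < K) (h : ρ ≤ K⁻¹ * r) (x₀ : E) :
    MapsTo (fun z => L (z - x₀) + x₀) (ball x₀ ρ) (ball x₀ r) := by
  intro z hz
  rw [mem_ball, dist_eq_norm] at hz ⊢
  calc ‖L (z - x₀) + x₀ - x₀‖ = ‖L (z - x₀)‖ := by rw [add_sub_cancel_right]
    _ ≤ K * ‖z - x₀‖ := L.le_of_opNorm_le hL _
    _ < K * ρ := mul_lt_mul_of_pos_left hz hK
    _ ≤ r := (le_inv_mul_iff₀ hK).1 h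

section DirichletIntegral

variable {E : Type*} [NormedAddCommGroup E] [InnerProductSpace ℝ E] [FiniteDimensional ℝ E]
  [MeasurableSpace E] [BorelSpace E] (μ : Measure E) [μ.IsAddHaarMeasure]

noncomputable def dirichletIntegral (u : E → ℝ) (s : Set E) : ℝ≥0∞ :=
  ∫⁻ x in s, (‖gradient u x‖₊ : ℝ≥0∞) ^ 2 ∂μ

theorem ofReal_abs_det_mul_dirichletIntegral_comp_affine_le {L : E →L[ℝ] E} (hL : IsUnit L)
    {K : ℝ} (hLK : ‖L‖ ≤ K) (x₀ : E) {s t : Set E} (hs : MeasurableSet s)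
    (hst : MapsTo (fun z => L (z - x₀) + x₀) s t) (u : E → ℝ) :
    ENNReal.ofReal |L.det| * dirichletIntegral μ (fun z => u (L (z - x₀) + x₀)) s ≤
      ENNReal.ofReal (K ^ 2) * dirichletIntegral μ u t := by
  have hsq : ∀ v : E, (‖v‖₊ : ℝ≥0∞) ^ 2 = ENNReal.ofReal (‖v‖ ^ 2) := fun v => by
    rw [ENNReal.ofReal_pow (norm_nonneg v), ← coe_nnnorm, ENNReal.ofReal_coe_nnreal]
  have hpt : ∀ y, (‖gradient (fun z => u (L (z - x₀) + x₀)) y‖₊ : ℝ≥0∞) ^ 2 ≤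
      ENNReal.ofReal (K ^ 2) * (‖gradient u (L (y - x₀) + x₀)‖₊ : ℝ≥0∞) ^ 2 := fun y => by
    set w := gradient u (L (y - x₀) + x₀)
    have hw : ‖adjoint L w‖ ≤ K * ‖w‖ :=
      (adjoint L).le_of_opNorm_le (by rwa [LinearIsometryEquiv.norm_map]) w
    rw [gradient_comp_affine hL, hsq, hsq, ← ENNReal.ofReal_mul (sq_nonneg K), ← mul_pow]
    gcongr
  have hT : ∀ y, HasFDerivAt (fun z => L (z - x₀) + x₀) L y := fun y => by
    simpa using (L.hasFDerivAt.comp y ((hasFDerivAt_id y).sub_const x₀)).add_const x₀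
  have hinj : InjOn (fun z => L (z - x₀) + x₀) s := fun a _ b _ hab =>
    sub_left_inj.mp
      ((ContinuousLinearEquiv.unitsEquiv ℝ E hL.unit).injective (add_right_cancel hab))
  calc ENNReal.ofReal |L.det| * dirichletIntegral μ (fun z => u (L (z - x₀) + x₀)) s
      ≤ ENNReal.ofReal |L.det| * (ENNReal.ofReal (K ^ 2) *
          ∫⁻ y in s, (‖gradient u (L (y - x₀) + x₀)‖₊ : ℝ≥0∞) ^ 2 ∂μ) := by
        rw [← lintegral_const_mul' _ _ ENNReal.ofReal_ne_top]
        gcongr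
        exact lintegral_mono hpt
    _ = ENNReal.ofReal (K ^ 2) * (ENNReal.ofReal |L.det| *
          ∫⁻ y in s, (‖gradient u (L (y - x₀) + x₀)‖₊ : ℝ≥0∞) ^ 2 ∂μ) := mul_left_comm _ _ _
    _ ≤ ENNReal.ofReal (K ^ 2) * dirichletIntegral μ u t := by
        gcongr
        exact ofReal_abs_det_mul_setLIntegral_comp_le μ hs hT hinj hst _

end DirichletIntegral

theorem ENNReal.le_ofReal_div_mul_of_ofReal_mul_le {a d : ℝ} {x y : ℝ≥0∞} (hd : 0 < d)
    (h : ENNReal.ofReal d * x ≤ ENNReal.ofReal a * y) : x ≤ ENNReal.ofReal (a / d) * y := by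
  have hd' : ENNReal.ofReal d ≠ 0 := (ENNReal.ofReal_pos.2 hd).ne'
  calc x = (ENNReal.ofReal d)⁻¹ * (ENNReal.ofReal d * x) := by
        rw [← mul_assoc, ENNReal.inv_mul_cancel hd' ENNReal.ofReal_ne_top, one_mul]
    _ ≤ (ENNReal.ofReal d)⁻¹ * (ENNReal.ofReal a * y) := by gcongr
    _ = ENNReal.ofReal (a / d) * y := by
        rw [div_eq_mul_inv, ENNReal.ofReal_mul' (inv_nonneg.2 hd.le), ENNReal.ofReal_inv_of_pos hd]
        ring

theorem rescaled_dirichlet_integral_change_of_variables_general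
    (n : ℕ) (lam Lam : ℝ) (hlam : 0 < lam)
    (A : Matrix (Fin n) (Fin n) ℝ) (hApos : A.PosDef)
    (hAell : ∀ ξ : EuclideanSpace ℝ (Fin n),
      lam * ‖ξ‖ ^ 2 ≤ ⟪Matrix.toEuclideanLin A ξ, ξ⟫ ∧
      ⟪Matrix.toEuclideanLin A ξ, ξ⟫ ≤ Lam * ‖ξ‖ ^ 2)
    (x₀ : EuclideanSpace ℝ (Fin n)) (r θ : ℝ) (hr : 0 < r)
    (hθ : θ ∈ Set.Ioc (0 : ℝ) (Real.sqrt Lam)⁻¹)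
    (u : EuclideanSpace ℝ (Fin n) → ℝ) :
    ENNReal.ofReal ((θ * r) ^ ((1 : ℝ) - n)) *
        ∫⁻ y in Metric.ball x₀ (θ * r),
          (‖gradient (fun z => u (Matrix.toEuclideanLin (matrixSqrt A) (z - x₀) + x₀)) y‖₊ :
            ℝ≥0∞) ^ 2 ≤
      ENNReal.ofReal (lam ^ (-(n : ℝ) / 2) * Lam * θ ^ ((1 : ℝ) - n) * r ^ ((1 : ℝ) - n)) *
        ∫⁻ x in Metric.ball x₀ r, (‖gradient u x‖₊ : ℝ≥0∞) ^ 2 := by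
  obtain ⟨hθ0, hθ1⟩ := hθ
  have hLam : 0 < Lam := Real.sqrt_pos.mp (inv_pos.mp (hθ0.trans_le hθ1))
  set S := matrixSqrt A
  have hnorm : ‖toEuclideanCLM (𝕜 := ℝ) S‖ ≤ √Lam :=
    (posSemidef_matrixSqrt hApos.posSemidef).1.norm_toEuclideanCLM_le (Real.sqrt_nonneg _)
      fun ξ => by rw [matrixSqrt_mul_self hApos.posSemidef, Real.sq_sqrt hLam.le]; exact (hAell ξ).2
  have hdet : lam ^ ((n : ℝ) / 2) ≤ S.det := rpow_le_det_matrixSqrt hApos.posSemidef hlam.le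
    (by simpa using hApos.1.pow_card_le_det hlam.le fun ξ => (hAell ξ).1)
  have hdet0 : 0 < S.det := (Real.rpow_pos_of_pos hlam _).trans_le hdet
  have hunit : IsUnit (toEuclideanCLM (𝕜 := ℝ) S) :=
    ((isUnit_iff_isUnit_det S).2 hdet0.ne'.isUnit).map _
  have key := ofReal_abs_det_mul_dirichletIntegral_comp_affine_le volume hunit hnorm x₀
    measurableSet_ball (mapsTo_ball_affine _ hnorm (Real.sqrt_pos.2 hLam)
      (mul_le_mul_of_nonneg_right hθ1 hr.le) x₀) u
  rw [det_toEuclideanCLM, abs_of_pos hdet0, Real.sq_sqrt hLam.le] at key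
  have hinv : S.det⁻¹ ≤ lam ^ (-(n : ℝ) / 2) := by
    rw [neg_div, Real.rpow_neg hlam.le]
    exact inv_anti₀ (by positivity) hdet
  calc _ ≤ ENNReal.ofReal ((θ * r) ^ ((1 : ℝ) - n)) *
        (ENNReal.ofReal (Lam / S.det) * dirichletIntegral volume u (ball x₀ r)) := by
        gcongr
        exact ENNReal.le_ofReal_div_mul_of_ofReal_mul_le hdet0 key
    _ ≤ _ := by
        rw [← mul_assoc, ← ENNReal.ofReal_mul (by positivity), Real.mul_rpow hθ0.le hr.le]
        gcongr ENNReal.ofReal ?_ * _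
        rw [div_eq_mul_inv]
        linarith [mul_le_mul_of_nonneg_left hinv (by positivity :
          (0 : ℝ) ≤ Lam * θ ^ ((1 : ℝ) - n) * r ^ ((1 : ℝ) - n))]

/-- Comparison of rescaled Dirichlet integrals under the change of
variables `T⁻¹(y) = A^{1/2}(y − x₀) + x₀`: for `θ ∈ (0, Λ^{−1/2}]`,
`(θr)^{1−n} ∫_{B_{θr}(x₀)} |∇(u∘T⁻¹)|² ≤ λ^{−n/2} Λ θ^{1−n} r^{1−n} ∫_{B_r(x₀)} |∇u|²`. -/
theorem rescaled_dirichlet_integral_change_of_variables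
    (n : ℕ) (hn : 1 ≤ n) (lam Lam : ℝ) (hlam : 0 < lam) (hlamLam : lam ≤ Lam)
    (A : Matrix (Fin n) (Fin n) ℝ) (hAsymm : A.IsSymm) (hApos : A.PosDef)
    (hAell : ∀ ξ : EuclideanSpace ℝ (Fin n),
      lam * ‖ξ‖ ^ 2 ≤ ⟪Matrix.toEuclideanLin A ξ, ξ⟫ ∧
      ⟪Matrix.toEuclideanLin A ξ, ξ⟫ ≤ Lam * ‖ξ‖ ^ 2)
    (x₀ : EuclideanSpace ℝ (Fin n)) (r θ : ℝ) (hr : 0 < r)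
    (hθ : θ ∈ Set.Ioc (0 : ℝ) (Real.sqrt Lam)⁻¹)
    (u : EuclideanSpace ℝ (Fin n) → ℝ)
    (hu : ContDiffOn ℝ 1 u (Metric.ball x₀ r)) :
    ENNReal.ofReal ((θ * r) ^ ((1 : ℝ) - n)) *
        ∫⁻ y in Metric.ball x₀ (θ * r),
          (‖gradient (fun z => u (Matrix.toEuclideanLin (matrixSqrt A) (z - x₀) + x₀)) y‖₊ :
            ℝ≥0∞) ^ 2 ≤
      ENNReal.ofReal (lam ^ (-(n : ℝ) / 2) * Lam * θ ^ ((1 : ℝ) - n) * r ^ ((1 : ℝ) - n)) *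
        ∫⁻ x in Metric.ball x₀ r, (‖gradient u x‖₊ : ℝ≥0∞) ^ 2 :=
  rescaled_dirichlet_integral_change_of_variables_general n lam Lam hlam A hApos hAell x₀ r θ hr hθ
    u
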